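/- arXiv:2305.00324 — 5 statements merged into one kernel-verified Lean document; each statement's English description precedes it below -/
import Mathlib

section
/- Let ω > 0 and let x₁ < x₂ < x₃ be real numbers. Then there exist coefficients (a₁, a₂, a₃) ≠ (0,0,0) such that the function φ(x) = ∑_{i=1}^3 a_i exp(−ω |x − x_i|) is zero for all x outside the open interval (x₁, x₃). -/
theorem kp_exists_three_points (ω : ℝ) (hω : 0 < ω)
    (x₁ x₂ x₃ : ℝ) (h12 : x₁ < x₂) (h23 : x₂ < x₃) :
    ∃ a₁ a₂ a₃ : ℝ, ¬(a₁ = 0 ∧ a₂ = 0 ∧ a₃ = 0) ∧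
      ∀ y : ℝ, y ∉ Set.Ioo x₁ x₃ →
        a₁ * Real.exp (-ω * |y - x₁|) + a₂ * Real.exp (-ω * |y - x₂|)
          + a₃ * Real.exp (-ω * |y - x₃|) = 0 := by
  refine ⟨Real.exp (ω * (x₃ - x₂)) - Real.exp (ω * (x₂ - x₃)),
    -(Real.exp (ω * (x₃ - x₁)) - Real.exp (ω * (x₁ - x₃))),
    Real.exp (ω * (x₂ - x₁)) - Real.exp (ω * (x₁ - x₂)), ?_, ?_⟩
  · rintro ⟨h1, -, -⟩
    have : Real.exp (ω * (x₂ - x₃)) < Real.exp (ω * (x₃ - x₂)) := by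
      apply Real.exp_lt_exp.2
      nlinarith
    linarith [sub_eq_zero.mp h1 ▸ this]
  · intro y hy
    simp only [Set.mem_Ioo, not_and_or, not_lt] at hy
    rcases hy with hy | hy
    · have h1 : |y - x₁| = x₁ - y := by rw [abs_of_nonpos (by linarith)]; ring
      have h2 : |y - x₂| = x₂ - y := by rw [abs_of_nonpos (by linarith)]; ring
      have h3 : |y - x₃| = x₃ - y := by rw [abs_of_nonpos (by linarith)]; ring
      rw [h1, h2, h3]
      simp only [sub_mul, neg_mul, mul_comm, ← Real.exp_add]
      ring_nf
    · have h1 : |y - x₁| = y - x₁ := abs_of_nonneg (by linarith)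
      have h2 : |y - x₂| = y - x₂ := abs_of_nonneg (by linarith)
      have h3 : |y - x₃| = y - x₃ := abs_of_nonneg (by linarith)
      rw [h1, h2, h3]
      simp only [sub_mul, neg_mul, mul_comm, ← Real.exp_add]
      ring_nf
end

section
/- Let ω > 0 and let x₁ < x₂ < x₃ < x₄ be real numbers. Suppose coefficients b₁, …, b₄ satisfy ∑_{i=1}^4 b_i exp(ω x_i) = 0 and ∑_{i=1}^4 b_i x_i exp(ω x_i) = 0. Then for every x ≥ x₄, the function ψ(x) = ∑_{i=1}^4 b_i (−|x − x_i|) exp(−ω|x − x_i|) equals 0. -/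
theorem gkp_right_tail (ω : ℝ) (hω : 0 < ω)
    (x₁ x₂ x₃ x₄ : ℝ) (h12 : x₁ < x₂) (h23 : x₂ < x₃) (h34 : x₃ < x₄)
    (b₁ b₂ b₃ b₄ : ℝ)
    (h1 : b₁ * Real.exp (ω * x₁) + b₂ * Real.exp (ω * x₂)
        + b₃ * Real.exp (ω * x₃) + b₄ * Real.exp (ω * x₄) = 0)
    (h2 : b₁ * x₁ * Real.exp (ω * x₁) + b₂ * x₂ * Real.exp (ω * x₂)
        + b₃ * x₃ * Real.exp (ω * x₃) + b₄ * x₄ * Real.exp (ω * x₄) = 0)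
    (y : ℝ) (hy : x₄ ≤ y) :
    b₁ * (-|y - x₁|) * Real.exp (-ω * |y - x₁|)
      + b₂ * (-|y - x₂|) * Real.exp (-ω * |y - x₂|)
      + b₃ * (-|y - x₃|) * Real.exp (-ω * |y - x₃|)
      + b₄ * (-|y - x₄|) * Real.exp (-ω * |y - x₄|) = 0 := by
  have a1 : |y - x₁| = y - x₁ := abs_of_nonneg (by linarith)
  have a2 : |y - x₂| = y - x₂ := abs_of_nonneg (by linarith)
  have a3 : |y - x₃| = y - x₃ := abs_of_nonneg (by linarith)
  have a4 : |y - x₄| = y - x₄ := abs_of_nonneg (by linarith)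
  rw [a1, a2, a3, a4]
  have e : ∀ t : ℝ, Real.exp (-ω * (y - t)) = Real.exp (-(ω*y)) * Real.exp (ω * t) := by
    intro t; rw [← Real.exp_add]; ring_nf
  rw [e x₁, e x₂, e x₃, e x₄]
  have : b₁ * (-(y - x₁)) * (Real.exp (-(ω*y)) * Real.exp (ω * x₁))
      + b₂ * (-(y - x₂)) * (Real.exp (-(ω*y)) * Real.exp (ω * x₂))
      + b₃ * (-(y - x₃)) * (Real.exp (-(ω*y)) * Real.exp (ω * x₃))
      + b₄ * (-(y - x₄)) * (Real.exp (-(ω*y)) * Real.exp (ω * x₄))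
      = Real.exp (-(ω*y)) * (-(y * (b₁ * Real.exp (ω * x₁) + b₂ * Real.exp (ω * x₂)
        + b₃ * Real.exp (ω * x₃) + b₄ * Real.exp (ω * x₄)))
        + (b₁ * x₁ * Real.exp (ω * x₁) + b₂ * x₂ * Real.exp (ω * x₂)
        + b₃ * x₃ * Real.exp (ω * x₃) + b₄ * x₄ * Real.exp (ω * x₄))) := by ring
  rw [this, h1, h2]
  ring
end

section
/- Let ω > 0 and let x₁ < x₂ < x₃ < x₄ be real numbers. Suppose coefficients b₁, …, b₄ satisfy ∑_{i=1}^4 b_i exp(−ω x_i) = 0, ∑_{i=1}^4 b_i x_i exp(−ω x_i) = 0, ∑_{i=1}^4 b_i exp(ω x_i) = 0, and ∑_{i=1}^4 b_i x_i exp(ω x_i) = 0. Then the function ψ(x) = ∑_{i=1}^4 b_i (−|x − x_i|) exp(−ω|x − x_i|) equals 0 for all x outside the open interval (x₁, x₄). -/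
theorem gkp_compact_support (ω : ℝ) (hω : 0 < ω)
    (x₁ x₂ x₃ x₄ : ℝ) (h12 : x₁ < x₂) (h23 : x₂ < x₃) (h34 : x₃ < x₄)
    (b₁ b₂ b₃ b₄ : ℝ)
    (h1 : b₁ * Real.exp (-ω * x₁) + b₂ * Real.exp (-ω * x₂)
        + b₃ * Real.exp (-ω * x₃) + b₄ * Real.exp (-ω * x₄) = 0)
    (h2 : b₁ * x₁ * Real.exp (-ω * x₁) + b₂ * x₂ * Real.exp (-ω * x₂)
        + b₃ * x₃ * Real.exp (-ω * x₃) + b₄ * x₄ * Real.exp (-ω * x₄) = 0)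
    (h3 : b₁ * Real.exp (ω * x₁) + b₂ * Real.exp (ω * x₂)
        + b₃ * Real.exp (ω * x₃) + b₄ * Real.exp (ω * x₄) = 0)
    (h4 : b₁ * x₁ * Real.exp (ω * x₁) + b₂ * x₂ * Real.exp (ω * x₂)
        + b₃ * x₃ * Real.exp (ω * x₃) + b₄ * x₄ * Real.exp (ω * x₄) = 0)
    (y : ℝ) (hy : y ∉ Set.Ioo x₁ x₄) :
    b₁ * (-|y - x₁|) * Real.exp (-ω * |y - x₁|)
      + b₂ * (-|y - x₂|) * Real.exp (-ω * |y - x₂|)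
      + b₃ * (-|y - x₃|) * Real.exp (-ω * |y - x₃|)
      + b₄ * (-|y - x₄|) * Real.exp (-ω * |y - x₄|) = 0 := by
  rw [Set.mem_Ioo, not_and_or, not_lt, not_lt] at hy
  rcases hy with hy | hy
  · have a1 : |y - x₁| = x₁ - y := by rw [abs_sub_comm]; exact abs_of_nonneg (by linarith)
    have a2 : |y - x₂| = x₂ - y := by rw [abs_sub_comm]; exact abs_of_nonneg (by linarith)
    have a3 : |y - x₃| = x₃ - y := by rw [abs_sub_comm]; exact abs_of_nonneg (by linarith)
    have a4 : |y - x₄| = x₄ - y := by rw [abs_sub_comm]; exact abs_of_nonneg (by linarith)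
    rw [a1, a2, a3, a4,
      show -ω * (x₁ - y) = -ω * x₁ + ω * y by ring,
      show -ω * (x₂ - y) = -ω * x₂ + ω * y by ring,
      show -ω * (x₃ - y) = -ω * x₃ + ω * y by ring,
      show -ω * (x₄ - y) = -ω * x₄ + ω * y by ring]
    simp only [Real.exp_add]
    linear_combination (Real.exp (ω * y) * y) * h1 - Real.exp (ω * y) * h2
  · have a1 : |y - x₁| = y - x₁ := abs_of_nonneg (by linarith)
    have a2 : |y - x₂| = y - x₂ := abs_of_nonneg (by linarith)
    have a3 : |y - x₃| = y - x₃ := abs_of_nonneg (by linarith)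
    have a4 : |y - x₄| = y - x₄ := abs_of_nonneg (by linarith)
    rw [a1, a2, a3, a4,
      show -ω * (y - x₁) = ω * x₁ + -ω * y by ring,
      show -ω * (y - x₂) = ω * x₂ + -ω * y by ring,
      show -ω * (y - x₃) = ω * x₃ + -ω * y by ring,
      show -ω * (y - x₄) = ω * x₄ + -ω * y by ring]
    simp only [Real.exp_add]
    linear_combination (-Real.exp (-ω * y) * y) * h3 + Real.exp (-ω * y) * h4
end

section
/- Let K be an invertible symmetric positive definite N×N real matrix, S an N×n real matrix, σ > 0, and Y ∈ ℝⁿ. Then Yᵀ Sᵀ K⁻¹ (K⁻¹ + σ⁻² S Sᵀ)⁻¹ K⁻¹ S Y = Yᵀ Sᵀ K⁻¹ S Y − Yᵀ Sᵀ S (Sᵀ K S + σ² I_n)⁻¹ Sᵀ S Y. -/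
open Matrix

theorem quadratic_form_identity (N n : ℕ) (K : Matrix (Fin N) (Fin N) ℝ)
    (hK : K.PosDef) (hKu : IsUnit K.det)
    (S : Matrix (Fin N) (Fin n) ℝ) (σ : ℝ) (hσ : 0 < σ) (Y : Fin n → ℝ) :
    Y ⬝ᵥ ((Sᵀ * K⁻¹ * (K⁻¹ + (σ ^ 2)⁻¹ • (S * Sᵀ))⁻¹ * K⁻¹ * S) *ᵥ Y) =
      Y ⬝ᵥ ((Sᵀ * K⁻¹ * S) *ᵥ Y) -
        Y ⬝ᵥ ((Sᵀ * S * (Sᵀ * K * S + σ ^ 2 • (1 : Matrix (Fin n) (Fin n) ℝ))⁻¹ * Sᵀ * S) *ᵥ Y) := by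
  set B : Matrix (Fin n) (Fin n) ℝ := Sᵀ * K * S + σ ^ 2 • (1 : Matrix (Fin n) (Fin n) ℝ) with hBdef
  have hσ2 : (0:ℝ) < σ ^ 2 := by positivity
  have hB : B.PosDef := by
    have h1 : (Sᵀ * K * S).PosSemidef := by
      have := hK.posSemidef.conjTranspose_mul_mul_same S
      simpa [conjTranspose_eq_transpose_of_trivial] using this
    have h2 : (σ ^ 2 • (1 : Matrix (Fin n) (Fin n) ℝ)).PosDef := by
      rw [smul_one_eq_diagonal]
      exact posDef_diagonal_iff.mpr fun _ => hσ2
    exact Matrix.PosDef.posSemidef_add h1 h2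
  have hBu : IsUnit B.det := isUnit_iff_isUnit_det _ |>.mp hB.isUnit
  have hBinv : B * B⁻¹ = 1 := mul_nonsing_inv _ hBu
  have hK1 : K * K⁻¹ = 1 := mul_nonsing_inv _ hKu
  have hK2 : K⁻¹ * K = 1 := nonsing_inv_mul _ hKu
  have hSB : S * (Sᵀ * K * S) * B⁻¹ = S - σ ^ 2 • (S * B⁻¹) := by
    have h : Sᵀ * K * S = B - σ ^ 2 • (1 : Matrix (Fin n) (Fin n) ℝ) := by
      rw [hBdef]; abel
    rw [h, Matrix.mul_sub, Matrix.sub_mul, Matrix.mul_assoc S B B⁻¹, hBinv,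
      Matrix.mul_one, Matrix.mul_smul, Matrix.smul_mul, Matrix.mul_one]
  have hSB2 : ∀ M : Matrix (Fin n) (Fin N) ℝ,
      S * (Sᵀ * (K * (S * (B⁻¹ * M)))) = S * M - σ ^ 2 • (S * (B⁻¹ * M)) := by
    intro M
    have := congrArg (· * M) hSB
    simpa [Matrix.sub_mul, Matrix.smul_mul, Matrix.mul_assoc] using this
  have hAinv : (K⁻¹ + (σ ^ 2)⁻¹ • (S * Sᵀ))⁻¹ = K - K * S * B⁻¹ * Sᵀ * K := by
    refine inv_eq_right_inv ?_
    have hc : (σ ^ 2)⁻¹ * σ ^ 2 = 1 := inv_mul_cancel₀ hσ2.ne'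
    simp only [Matrix.add_mul, Matrix.mul_sub, Matrix.smul_mul, Matrix.mul_assoc]
    rw [show K⁻¹ * (K * (S * (B⁻¹ * (Sᵀ * K)))) = (K⁻¹ * K) * (S * (B⁻¹ * (Sᵀ * K))) by
      simp only [Matrix.mul_assoc]]
    rw [hK2, Matrix.one_mul, hSB2 (Sᵀ * K), smul_sub, smul_smul, hc, one_smul]
    abel
  rw [hAinv]
  have hM : Sᵀ * K⁻¹ * (K - K * S * B⁻¹ * Sᵀ * K) * K⁻¹ * S
      = Sᵀ * K⁻¹ * S - Sᵀ * S * B⁻¹ * Sᵀ * S := by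
    have e1 : Sᵀ * K⁻¹ * (K - K * S * B⁻¹ * Sᵀ * K) * K⁻¹ * S
        = Sᵀ * (K⁻¹ * (K * (K⁻¹ * S)))
          - Sᵀ * (K⁻¹ * (K * (S * (B⁻¹ * (Sᵀ * (K * (K⁻¹ * S))))))) := by
      simp only [Matrix.mul_sub, Matrix.sub_mul, Matrix.mul_assoc]
    rw [e1]
    simp only [← Matrix.mul_assoc K⁻¹ K, ← Matrix.mul_assoc K K⁻¹, hK1, hK2, Matrix.one_mul]
    simp only [Matrix.mul_assoc]
  rw [hM, Matrix.sub_mulVec, dotProduct_sub]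
end

section
/- Let ω > 0 and x₁ < x₂ < ⋯ < x_n be sorted real numbers, and let K be the n×n matrix with entries K_{ij} = exp(−ω|x_i − x_j|). Then K is invertible and its inverse is tridiagonal: (K⁻¹)_{ij} = 0 whenever |i − j| > 1. -/
open Matrix Finset

lemma one_sub_div_sq_ne {a b : ℝ} (ha : 0 < a) (hab : a < b) : 1 - (a/b)^2 ≠ 0 := by
  have hb : 0 < b := ha.trans hab
  have h1 : a/b < 1 := (div_lt_one hb).2 hab
  have h0 : 0 < a/b := div_pos ha hb
  nlinarith

lemma sq_sub_sq_ne {a b : ℝ} (ha : 0 < a) (hab : a < b) : b^2 - a^2 ≠ 0 := by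
  nlinarith

lemma offdiag_form {a b : ℝ} (ha : 0 < a) (hab : a < b) :
    -(a/b)/(1 - (a/b)^2) = -(a*b)/(b^2 - a^2) := by
  have hb : (0:ℝ) < b := ha.trans hab
  have h1 : b^2 - a^2 ≠ 0 := sq_sub_sq_ne ha hab
  have h2 : 1 - (a/b)^2 ≠ 0 := one_sub_div_sq_ne ha hab
  field_simp

lemma diag_form {a b : ℝ} (ha : 0 < a) (hab : a < b) :
    1/(1 - (a/b)^2) = b^2/(b^2 - a^2) := by
  have hb : (0:ℝ) < b := ha.trans hab
  have h1 : b^2 - a^2 ≠ 0 := sq_sub_sq_ne ha hab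
  have h2 : 1 - (a/b)^2 ≠ 0 := one_sub_div_sq_ne ha hab
  field_simp

noncomputable def Bmat {n : ℕ} (s : Fin n → ℝ) : Matrix (Fin n) (Fin n) ℝ :=
  fun i j =>
    if (i : ℕ) = (j : ℕ) then
      (if h : (j:ℕ)+1 < n then 1/(1 - (s j / s ⟨(j:ℕ)+1, h⟩)^2) else 1) +
      (if 0 < (j:ℕ) then
        1/(1 - (s ⟨(j:ℕ)-1, Nat.lt_of_le_of_lt (Nat.sub_le _ _) j.isLt⟩ / s j)^2)
       else 1) - 1
    else if (i:ℕ)+1 = (j:ℕ) then -(s i / s j)/(1 - (s i / s j)^2)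
    else if (j:ℕ)+1 = (i:ℕ) then -(s j / s i)/(1 - (s j / s i)^2)
    else 0

lemma key {n : ℕ} (s : Fin n → ℝ) (hpos : ∀ i, 0 < s i) (hmono : StrictMono s)
    (K : Matrix (Fin n) (Fin n) ℝ)
    (hK : ∀ i j, i ≤ j → K i j = s i / s j) (hsymm : ∀ i j, K i j = K j i) :
    K * Bmat s = 1 := by
  ext i j
  rw [Matrix.mul_apply, Matrix.one_apply]
  have hsum : ∀ (t : Finset (Fin n)), (∀ k, k ∉ t → K i k * Bmat s k j = 0) →
      ∑ k, K i k * Bmat s k j = ∑ k ∈ t, K i k * Bmat s k j :=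
    fun t h => (Finset.sum_subset t.subset_univ (fun k _ hk => h k hk)).symm
  by_cases hj0 : 0 < (j:ℕ) <;> by_cases hjn : (j:ℕ)+1 < n
  · -- interior column
    obtain ⟨jm, hjm⟩ : ∃ jm : Fin n, (jm:ℕ) = (j:ℕ)-1 :=
      ⟨⟨(j:ℕ)-1, Nat.lt_of_le_of_lt (Nat.sub_le _ _) j.isLt⟩, rfl⟩
    obtain ⟨jp, hjp⟩ : ∃ jp : Fin n, (jp:ℕ) = (j:ℕ)+1 := ⟨⟨(j:ℕ)+1, hjn⟩, rfl⟩
    rw [hsum {jm, j, jp} (by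
      intro k hk
      simp only [Finset.mem_insert, Finset.mem_singleton, not_or] at hk
      obtain ⟨hk1, hk2, hk3⟩ := hk
      have e1 : ¬((k:ℕ) = (j:ℕ)) := fun h => hk2 (Fin.ext h)
      have e2 : ¬((k:ℕ)+1 = (j:ℕ)) := fun h => hk1 (Fin.ext (by omega))
      have e3 : ¬((j:ℕ)+1 = (k:ℕ)) := fun h => hk3 (Fin.ext (by omega))
      simp [Bmat, e1, e2, e3])]
    have hne1 : jm ∉ ({j, jp} : Finset (Fin n)) := by
      simp only [Finset.mem_insert, Finset.mem_singleton, Fin.ext_iff]; omega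
    have hne2 : j ∉ ({jp} : Finset (Fin n)) := by
      simp only [Finset.mem_singleton, Fin.ext_iff]; omega
    rw [Finset.sum_insert hne1, Finset.sum_insert hne2, Finset.sum_singleton]
    have hmj : jm < j := by rw [Fin.lt_def]; omega
    have hjp' : j < jp := by rw [Fin.lt_def]; omega
    have ha : 0 < s jm := hpos jm
    have hb : 0 < s j := hpos j
    have hc : 0 < s jp := hpos jp
    have hab : s jm < s j := hmono hmj
    have hbc : s j < s jp := hmono hjp'
    have hBm : Bmat s jm j = -(s jm * s j)/((s j)^2 - (s jm)^2) := by
      have c1 : ¬((jm:ℕ) = (j:ℕ)) := by omega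
      have c2 : (jm:ℕ)+1 = (j:ℕ) := by omega
      rw [show Bmat s jm j = -(s jm / s j)/(1 - (s jm / s j)^2) by
        simp [Bmat, c1, c2]]
      exact offdiag_form ha hab
    have hBp : Bmat s jp j = -(s j * s jp)/((s jp)^2 - (s j)^2) := by
      have c1 : ¬((jp:ℕ) = (j:ℕ)) := by omega
      have c2 : ¬((jp:ℕ)+1 = (j:ℕ)) := by omega
      have c3 : (j:ℕ)+1 = (jp:ℕ) := by omega
      rw [show Bmat s jp j = -(s j / s jp)/(1 - (s j / s jp)^2) by
        simp [Bmat, c1, c2, c3]]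
      exact offdiag_form hb hbc
    have hBj : Bmat s j j = (s jp)^2/((s jp)^2 - (s j)^2) + (s j)^2/((s j)^2 - (s jm)^2) - 1 := by
      have e1 : (⟨(j:ℕ)+1, hjn⟩ : Fin n) = jp := Fin.ext (by simp only [Fin.val_mk]; omega)
      have e2 : (⟨(j:ℕ)-1, Nat.lt_of_le_of_lt (Nat.sub_le _ _) j.isLt⟩ : Fin n) = jm :=
        Fin.ext (by simp only [Fin.val_mk]; omega)
      rw [show Bmat s j j = 1/(1 - (s j / s jp)^2) + 1/(1 - (s jm / s j)^2) - 1 by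
        simp [Bmat, hjn, hj0, e1, e2]]
      rw [diag_form hb hbc, diag_form ha hab]
    rw [hBm, hBp, hBj]
    have d1 : (s j)^2 - (s jm)^2 ≠ 0 := sq_sub_sq_ne ha hab
    have d2 : (s jp)^2 - (s j)^2 ≠ 0 := sq_sub_sq_ne hb hbc
    rcases lt_trichotomy (i:ℕ) (j:ℕ) with hij | hij | hij
    · have hi1 : i ≤ jm := by rw [Fin.le_def]; omega
      have hi2 : i ≤ j := by rw [Fin.le_def]; omega
      have hi3 : i ≤ jp := by rw [Fin.le_def]; omega
      rw [hK i jm hi1, hK i j hi2, hK i jp hi3,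
        if_neg (fun h => by simp [h] at hij)]
      field_simp
      ring
    · have : i = j := Fin.ext hij
      subst this
      rw [hsymm i jm, hK jm i (le_of_lt hmj), hK i i le_rfl, hK i jp (le_of_lt hjp'),
        if_pos rfl]
      field_simp
      ring
    · have hi1 : jm ≤ i := by rw [Fin.le_def]; omega
      have hi2 : j ≤ i := by rw [Fin.le_def]; omega
      have hi3 : jp ≤ i := by rw [Fin.le_def]; omega
      rw [hsymm i jm, hsymm i j, hsymm i jp, hK jm i hi1, hK j i hi2, hK jp i hi3,
        if_neg (fun h => by simp [h] at hij)]
      have hi0 : s i ≠ 0 := ne_of_gt (hpos i)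
      field_simp
      ring
  · -- last column
    obtain ⟨jm, hjm⟩ : ∃ jm : Fin n, (jm:ℕ) = (j:ℕ)-1 :=
      ⟨⟨(j:ℕ)-1, Nat.lt_of_le_of_lt (Nat.sub_le _ _) j.isLt⟩, rfl⟩
    rw [hsum {jm, j} (by
      intro k hk
      simp only [Finset.mem_insert, Finset.mem_singleton, not_or] at hk
      obtain ⟨hk1, hk2⟩ := hk
      have e1 : ¬((k:ℕ) = (j:ℕ)) := fun h => hk2 (Fin.ext h)
      have e2 : ¬((k:ℕ)+1 = (j:ℕ)) := fun h => hk1 (Fin.ext (by omega))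
      have e3 : ¬((j:ℕ)+1 = (k:ℕ)) := fun h => absurd (h ▸ k.isLt) (by omega)
      simp [Bmat, e1, e2, e3])]
    have hne1 : jm ∉ ({j} : Finset (Fin n)) := by
      simp only [Finset.mem_singleton, Fin.ext_iff]; omega
    rw [Finset.sum_insert hne1, Finset.sum_singleton]
    have hmj : jm < j := by rw [Fin.lt_def]; omega
    have ha : 0 < s jm := hpos jm
    have hb : 0 < s j := hpos j
    have hab : s jm < s j := hmono hmj
    have hBm : Bmat s jm j = -(s jm * s j)/((s j)^2 - (s jm)^2) := by
      have c1 : ¬((jm:ℕ) = (j:ℕ)) := by omega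
      have c2 : (jm:ℕ)+1 = (j:ℕ) := by omega
      rw [show Bmat s jm j = -(s jm / s j)/(1 - (s jm / s j)^2) by
        simp [Bmat, c1, c2]]
      exact offdiag_form ha hab
    have hBj : Bmat s j j = (s j)^2/((s j)^2 - (s jm)^2) := by
      have e2 : (⟨(j:ℕ)-1, Nat.lt_of_le_of_lt (Nat.sub_le _ _) j.isLt⟩ : Fin n) = jm :=
        Fin.ext (by simp only [Fin.val_mk]; omega)
      rw [show Bmat s j j = 1/(1 - (s jm / s j)^2) by
        simp [Bmat, hjn, hj0, e2]]
      exact diag_form ha hab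
    rw [hBm, hBj]
    have d1 : (s j)^2 - (s jm)^2 ≠ 0 := sq_sub_sq_ne ha hab
    rcases lt_trichotomy (i:ℕ) (j:ℕ) with hij | hij | hij
    · have hi1 : i ≤ jm := by rw [Fin.le_def]; omega
      have hi2 : i ≤ j := by rw [Fin.le_def]; omega
      rw [hK i jm hi1, hK i j hi2, if_neg (fun h => by simp [h] at hij)]
      field_simp
      ring
    · have : i = j := Fin.ext hij
      subst this
      rw [hsymm i jm, hK jm i (le_of_lt hmj), hK i i le_rfl, if_pos rfl]
      field_simp
      ring
    · exact absurd i.isLt (by omega)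
  · -- first column
    obtain ⟨jp, hjp⟩ : ∃ jp : Fin n, (jp:ℕ) = (j:ℕ)+1 := ⟨⟨(j:ℕ)+1, hjn⟩, rfl⟩
    rw [hsum {j, jp} (by
      intro k hk
      simp only [Finset.mem_insert, Finset.mem_singleton, not_or] at hk
      obtain ⟨hk1, hk2⟩ := hk
      have e1 : ¬((k:ℕ) = (j:ℕ)) := fun h => hk1 (Fin.ext h)
      have e2 : ¬((k:ℕ)+1 = (j:ℕ)) := by omega
      have e3 : ¬((j:ℕ)+1 = (k:ℕ)) := fun h => hk2 (Fin.ext (by omega))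
      simp [Bmat, e1, e2, e3])]
    have hne1 : j ∉ ({jp} : Finset (Fin n)) := by
      simp only [Finset.mem_singleton, Fin.ext_iff]; omega
    rw [Finset.sum_insert hne1, Finset.sum_singleton]
    have hjp' : j < jp := by rw [Fin.lt_def]; omega
    have hb : 0 < s j := hpos j
    have hc : 0 < s jp := hpos jp
    have hbc : s j < s jp := hmono hjp'
    have hBp : Bmat s jp j = -(s j * s jp)/((s jp)^2 - (s j)^2) := by
      have c1 : ¬((jp:ℕ) = (j:ℕ)) := by omega
      have c2 : ¬((jp:ℕ)+1 = (j:ℕ)) := by omega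
      have c3 : (j:ℕ)+1 = (jp:ℕ) := by omega
      rw [show Bmat s jp j = -(s j / s jp)/(1 - (s j / s jp)^2) by
        simp [Bmat, c1, c2, c3]]
      exact offdiag_form hb hbc
    have hBj : Bmat s j j = (s jp)^2/((s jp)^2 - (s j)^2) := by
      have e1 : (⟨(j:ℕ)+1, hjn⟩ : Fin n) = jp := Fin.ext (by simp only [Fin.val_mk]; omega)
      rw [show Bmat s j j = 1/(1 - (s j / s jp)^2) by
        simp [Bmat, hjn, hj0, e1]]
      exact diag_form hb hbc
    rw [hBp, hBj]
    have d2 : (s jp)^2 - (s j)^2 ≠ 0 := sq_sub_sq_ne hb hbc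
    rcases lt_trichotomy (i:ℕ) (j:ℕ) with hij | hij | hij
    · omega
    · have : i = j := Fin.ext hij
      subst this
      rw [hK i i le_rfl, hK i jp (le_of_lt hjp'), if_pos rfl]
      field_simp
      ring
    · have hi2 : j ≤ i := by rw [Fin.le_def]; omega
      have hi3 : jp ≤ i := by rw [Fin.le_def]; omega
      rw [hsymm i j, hsymm i jp, hK j i hi2, hK jp i hi3,
        if_neg (fun h => by simp [h] at hij)]
      have hi0 : 0 < s i := hpos i
      field_simp
      ring
  · -- single entry
    rw [hsum {j} (by
      intro k hk
      simp only [Finset.mem_singleton] at hk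
      have e1 : ¬((k:ℕ) = (j:ℕ)) := fun h => hk (Fin.ext h)
      have e2 : ¬((k:ℕ)+1 = (j:ℕ)) := by omega
      have e3 : ¬((j:ℕ)+1 = (k:ℕ)) := fun h => absurd (h ▸ k.isLt) (by omega)
      simp [Bmat, e1, e2, e3])]
    rw [Finset.sum_singleton]
    have hBj : Bmat s j j = 1 := by simp [Bmat, hjn, hj0]
    have hij : i = j := Fin.ext (by omega)
    subst hij
    rw [hBj, hK i i le_rfl, if_pos rfl]
    have hi0 : 0 < s i := hpos i
    field_simp

theorem matern_half_inverse_tridiagonal (n : ℕ) (ω : ℝ) (hω : 0 < ω)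
    (x : Fin n → ℝ) (hx : StrictMono x)
    (K : Matrix (Fin n) (Fin n) ℝ)
    (hK : ∀ i j, K i j = Real.exp (-ω * |x i - x j|)) :
    IsUnit K.det ∧ ∀ (i j : Fin n), |(i : ℤ) - (j : ℤ)| > 1 → K⁻¹ i j = 0 := by
  set s : Fin n → ℝ := fun i => Real.exp (ω * x i) with hs
  have hpos : ∀ i, 0 < s i := fun i => Real.exp_pos _
  have hmono : StrictMono s := fun i j hij =>
    Real.exp_lt_exp.2 (mul_lt_mul_of_pos_left (hx hij) hω)
  have hK' : ∀ i j, i ≤ j → K i j = s i / s j := by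
    intro i j hij
    have hxle : x i ≤ x j := hx.monotone hij
    rw [hK, abs_of_nonpos (by linarith), hs]
    rw [← Real.exp_sub]
    ring_nf
  have hsymm : ∀ i j, K i j = K j i := by
    intro i j; rw [hK, hK, abs_sub_comm]
  have hKB : K * Bmat s = 1 := key s hpos hmono K hK' hsymm
  constructor
  · exact Matrix.isUnit_det_of_right_inverse hKB
  · intro i j hij
    rw [Matrix.inv_eq_right_inv hKB]
    have habs : (i:ℤ) - (j:ℤ) > 1 ∨ (j:ℤ) - (i:ℤ) > 1 := by
      rcases abs_cases ((i:ℤ) - (j:ℤ)) with ⟨h1, h2⟩ | ⟨h1, h2⟩ <;> omega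
    have e1 : ¬((i:ℕ) = (j:ℕ)) := by omega
    have e2 : ¬((i:ℕ)+1 = (j:ℕ)) := by omega
    have e3 : ¬((j:ℕ)+1 = (i:ℕ)) := by omega
    simp [Bmat, e1, e2, e3]
end
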